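/- arXiv:1712.08531 — 4 statements merged into one kernel-verified Lean document; each statement's English description precedes it below -/
import Mathlib

section
/- Let J_n = diag(I_n, -I_n) and J_m = diag(I_m, -I_m). Let Ω ∈ ℂ^{2n×2n} be Hermitian, C ∈ ℂ^{2m×2n}, define C♭ = J_m C† J_n and A = -(1/2) C♭ C - i J_n Ω. If y ∈ ℂ^{2n} is a nonzero eigenvector of A with eigenvalue λ and C y = 0, then -conj(λ) is also an eigenvalue of A (with left eigenvector y† J_n). Consequently, if every eigenvalue of A has strictly negative real part (A is Hurwitz), then C y ≠ 0 for every eigenvector y of A. -/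
noncomputable section
open Matrix

def Jmat (k : ℕ) : Matrix (Fin k ⊕ Fin k) (Fin k ⊕ Fin k) ℂ :=
  Matrix.fromBlocks 1 0 0 (-1)

lemma Jmat_mul_Jmat (k : ℕ) : Jmat k * Jmat k = 1 := by
  simp [Jmat, Matrix.fromBlocks_multiply, ← Matrix.fromBlocks_one]

lemma Jmat_conjTranspose (k : ℕ) : (Jmat k)ᴴ = Jmat k := by
  simp [Jmat, Matrix.fromBlocks_conjTranspose]

lemma vecMul_smulMat {k k' : ℕ} (v : Fin k ⊕ Fin k → ℂ) (c : ℂ)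
    (M : Matrix (Fin k ⊕ Fin k) (Fin k' ⊕ Fin k') ℂ) :
    Matrix.vecMul v (c • M) = c • Matrix.vecMul v M := by
  ext i
  simp only [Matrix.vecMul, dotProduct, Matrix.smul_apply, Pi.smul_apply,
    smul_eq_mul, Fintype.sum_sum_type]
  rw [mul_add, Finset.mul_sum, Finset.mul_sum]
  simp [mul_left_comm]

lemma mem_spectrum_of_det (k : ℕ) (M : Matrix (Fin k ⊕ Fin k) (Fin k ⊕ Fin k) ℂ)
    (μ : ℂ) (h : (μ • (1 : Matrix (Fin k ⊕ Fin k) (Fin k ⊕ Fin k) ℂ) - M).det = 0) :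
    μ ∈ spectrum ℂ M := by
  rw [spectrum.mem_iff]
  intro hu
  rw [Matrix.isUnit_iff_isUnit_det] at hu
  rw [show (algebraMap ℂ (Matrix (Fin k ⊕ Fin k) (Fin k ⊕ Fin k) ℂ)) μ - M
      = μ • 1 - M by simp [Algebra.algebraMap_eq_smul_one]] at hu
  rw [h] at hu
  exact hu.ne_zero rfl

theorem stmt0 (n m : ℕ)
    (Ω : Matrix (Fin n ⊕ Fin n) (Fin n ⊕ Fin n) ℂ) (hΩ : Ω.IsHermitian)
    (C : Matrix (Fin m ⊕ Fin m) (Fin n ⊕ Fin n) ℂ)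
    (A : Matrix (Fin n ⊕ Fin n) (Fin n ⊕ Fin n) ℂ)
    (hA : A = -((1/2 : ℂ) • ((Jmat n * Cᴴ * Jmat m) * C)) - Complex.I • (Jmat n * Ω))
    (y : Fin n ⊕ Fin n → ℂ) (hy : y ≠ 0) (l : ℂ)
    (heig : A.mulVec y = l • y) (hCy : C.mulVec y = 0) :
    Matrix.vecMul (Matrix.vecMul (star y) (Jmat n)) A
      = (-(starRingEnd ℂ l)) • Matrix.vecMul (star y) (Jmat n) ∧
    ¬ (∀ μ ∈ spectrum ℂ A, μ.re < 0) := by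
  -- From heig and hCy : (Jmat n * Ω) *ᵥ y = (I*l) • y
  have hJΩy : (Jmat n * Ω).mulVec y = (Complex.I * l) • y := by
    have h1 : A.mulVec y = - (Complex.I • (Jmat n * Ω).mulVec y) := by
      rw [hA]
      rw [Matrix.sub_mulVec, Matrix.neg_mulVec, Matrix.smul_mulVec,
        Matrix.smul_mulVec]
      rw [show (Jmat n * Cᴴ * Jmat m * C).mulVec y
        = (Jmat n * Cᴴ * Jmat m).mulVec (C.mulVec y) by rw [← Matrix.mulVec_mulVec]]
      rw [hCy]
      simp
    rw [heig] at h1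
    have h2 := congrArg (fun v => Complex.I • v) h1
    simp only [smul_neg, smul_smul, Complex.I_mul_I, neg_smul, one_smul, neg_neg] at h2
    exact h2.symm
  have hΩy : Ω.mulVec y = (Complex.I * l) • (Jmat n).mulVec y := by
    have := congrArg (fun v => (Jmat n).mulVec v) hJΩy
    simp only [Matrix.mulVec_mulVec, ← Matrix.mul_assoc, Jmat_mul_Jmat, Matrix.one_mul,
      Matrix.mulVec_smul] at this
    exact this
  -- star y ᵥ* Cᴴ = 0
  have hstarC : Matrix.vecMul (star y) Cᴴ = 0 := by
    rw [← Matrix.star_mulVec, hCy]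
    simp
  -- star y ᵥ* Ω
  have hstarΩ : Matrix.vecMul (star y) Ω = (-(Complex.I) * (starRingEnd ℂ l)) •
      Matrix.vecMul (star y) (Jmat n) := by
    have : Matrix.vecMul (star y) Ωᴴ = star (Ω.mulVec y) := (Matrix.star_mulVec Ω y).symm
    rw [hΩ.eq] at this
    rw [this, hΩy, star_smul, Matrix.star_mulVec, Jmat_conjTranspose]
    congr 1
    simp [mul_comm]
  have key : Matrix.vecMul (Matrix.vecMul (star y) (Jmat n)) A
      = (-(starRingEnd ℂ l)) • Matrix.vecMul (star y) (Jmat n) := by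
    rw [hA]
    rw [Matrix.vecMul_sub, Matrix.vecMul_neg, vecMul_smulMat, vecMul_smulMat]
    rw [Matrix.vecMul_vecMul, Matrix.vecMul_vecMul]
    rw [show Jmat n * (Jmat n * Cᴴ * Jmat m * C) = Cᴴ * Jmat m * C by
      rw [← Matrix.mul_assoc, ← Matrix.mul_assoc, ← Matrix.mul_assoc, Jmat_mul_Jmat,
        Matrix.one_mul]]
    rw [show Jmat n * (Jmat n * Ω) = Ω by
      rw [← Matrix.mul_assoc, Jmat_mul_Jmat, Matrix.one_mul]]
    rw [show Matrix.vecMul (star y) (Cᴴ * Jmat m * C)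
      = Matrix.vecMul (Matrix.vecMul (Matrix.vecMul (star y) Cᴴ) (Jmat m)) C by
        simp [Matrix.vecMul_vecMul, Matrix.mul_assoc]]
    rw [hstarC, hstarΩ]
    simp [smul_smul]
    ring_nf
    rw [Complex.I_sq]
    simp
  refine ⟨key, ?_⟩
  intro hall
  have hJy : Matrix.vecMul (star y) (Jmat n) ≠ 0 := by
    intro h0
    have : star y = 0 := by
      have := congrArg (fun v => Matrix.vecMul v (Jmat n)) h0
      simpa [Matrix.vecMul_vecMul, Jmat_mul_Jmat] using this
    exact hy (by simpa using congrArg star this)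
  -- l is an eigenvalue
  have hl : l ∈ spectrum ℂ A := by
    apply mem_spectrum_of_det
    rw [← Matrix.exists_mulVec_eq_zero_iff]
    exact ⟨y, hy, by rw [Matrix.sub_mulVec, heig, Matrix.smul_mulVec,
      Matrix.one_mulVec, sub_self]⟩
  -- -(conj l) is an eigenvalue
  have hl2 : -(starRingEnd ℂ l) ∈ spectrum ℂ A := by
    apply mem_spectrum_of_det
    rw [← Matrix.exists_vecMul_eq_zero_iff]
    refine ⟨Matrix.vecMul (star y) (Jmat n), hJy, ?_⟩
    rw [Matrix.vecMul_sub, key, vecMul_smulMat, Matrix.vecMul_one, sub_self]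
  have h1 := hall l hl
  have h2 := hall _ hl2
  simp at h2
  linarith
end
end

section
/- Let A ∈ ℂ^{n×n} and let C ∈ ℂ^{1×n} be a row vector with A + A† + C†C = 0. Then for every s ∈ ℂ that is not an eigenvalue of A, the single-input single-output transfer function satisfies 1 - C (sI - A)^{-1} C† = det(sI + A†) / det(sI - A). -/
noncomputable section
open Matrix

theorem stmt4 (n : ℕ) (A : Matrix (Fin n) (Fin n) ℂ) (C : Matrix (Fin 1) (Fin n) ℂ)
    (hPR : A + Aᴴ + Cᴴ * C = 0) (s : ℂ)
    (hs : (s • (1 : Matrix (Fin n) (Fin n) ℂ) - A).det ≠ 0) :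
    (1 : Matrix (Fin 1) (Fin 1) ℂ) - C * (s • (1 : Matrix (Fin n) (Fin n) ℂ) - A)⁻¹ * Cᴴ
      = ((s • (1 : Matrix (Fin n) (Fin n) ℂ) + Aᴴ).det
          / (s • (1 : Matrix (Fin n) (Fin n) ℂ) - A).det) • 1 := by
  set M : Matrix (Fin n) (Fin n) ℂ := s • (1 : Matrix (Fin n) (Fin n) ℂ) - A with hM
  have hMC : M - Cᴴ * C = s • (1 : Matrix (Fin n) (Fin n) ℂ) + Aᴴ := by
    have hC : Cᴴ * C = -(A + Aᴴ) := eq_neg_of_add_eq_zero_right hPR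
    rw [hM, hC]; abel
  have hMinv : M * M⁻¹ = 1 := Matrix.mul_nonsing_inv M (isUnit_iff_ne_zero.mpr hs)
  have hfact : M - Cᴴ * C = M * (1 - M⁻¹ * (Cᴴ * C)) := by
    rw [Matrix.mul_sub, mul_one, ← Matrix.mul_assoc, hMinv, Matrix.one_mul]
  have hdet : (s • (1 : Matrix (Fin n) (Fin n) ℂ) + Aᴴ).det
      = M.det * (1 - C * M⁻¹ * Cᴴ).det := by
    rw [← hMC, hfact, Matrix.det_mul]
    congr 1
    have := Matrix.det_one_add_mul_comm (-(M⁻¹ * Cᴴ)) C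
    simpa [sub_eq_add_neg, Matrix.neg_mul, Matrix.mul_neg, Matrix.mul_assoc] using this
  have hX : ∀ X : Matrix (Fin 1) (Fin 1) ℂ, X = X.det • 1 := by
    intro X
    ext i j
    fin_cases i; fin_cases j
    simp [Matrix.det_fin_one]
  rw [hdet, mul_comm, mul_div_assoc, div_self hs, mul_one]
  exact hX _
end
end

section
/- Let A ∈ ℂ^{n×n} and C ∈ ℂ^{m×n} satisfy A + A† + C†C = 0. Then for every real ω such that -iω is not an eigenvalue of A, the matrix Ξ(-iω) = I_m - C(-iω I - A)^{-1} C† is unitary: Ξ(-iω) Ξ(-iω)† = I_m. -/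
noncomputable section
open Matrix

theorem stmt5 (n m : ℕ) (A : Matrix (Fin n) (Fin n) ℂ) (C : Matrix (Fin m) (Fin n) ℂ)
    (hPR : A + Aᴴ + Cᴴ * C = 0) (ω : ℝ)
    (hs : (((-(Complex.I * (ω : ℂ)))) • (1 : Matrix (Fin n) (Fin n) ℂ) - A).det ≠ 0) :
    ((1 : Matrix (Fin m) (Fin m) ℂ)
        - C * ((-(Complex.I * (ω : ℂ))) • (1 : Matrix (Fin n) (Fin n) ℂ) - A)⁻¹ * Cᴴ) *
      ((1 : Matrix (Fin m) (Fin m) ℂ)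
        - C * ((-(Complex.I * (ω : ℂ))) • (1 : Matrix (Fin n) (Fin n) ℂ) - A)⁻¹ * Cᴴ)ᴴ
      = 1 := by
  set s : ℂ := -(Complex.I * (ω : ℂ)) with hsdef
  set M : Matrix (Fin n) (Fin n) ℂ := s • (1 : Matrix (Fin n) (Fin n) ℂ) - A with hMdef
  have hMunit : IsUnit M.det := isUnit_iff_ne_zero.mpr hs
  have hMH : Mᴴ = (starRingEnd ℂ) s • (1 : Matrix (Fin n) (Fin n) ℂ) - Aᴴ := by
    simp [hMdef, conjTranspose_smul]
  have hsconj : s + (starRingEnd ℂ) s = 0 := by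
    simp [hsdef, Complex.conj_I, mul_comm]
  have hkey : Cᴴ * C = M + Mᴴ := by
    have h1 : Cᴴ * C = -(A + Aᴴ) := (neg_eq_of_add_eq_zero_right hPR).symm
    have h2 : M + Mᴴ = (s + (starRingEnd ℂ) s) • (1 : Matrix (Fin n) (Fin n) ℂ)
        - (A + Aᴴ) := by
      rw [hMH, hMdef, add_smul]; abel
    rw [h1, h2, hsconj, zero_smul, zero_sub]
  have hinv2 : M⁻¹ * M = 1 := nonsing_inv_mul _ hMunit
  have hinvH : (M⁻¹)ᴴ = (Mᴴ)⁻¹ := conjTranspose_nonsing_inv M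
  have hMHunit : IsUnit Mᴴ.det := by
    rw [det_conjTranspose]; exact isUnit_star.mpr hMunit
  have hinv3 : Mᴴ * (Mᴴ)⁻¹ = 1 := mul_nonsing_inv _ hMHunit
  have hmid : M⁻¹ * (Cᴴ * C) * (Mᴴ)⁻¹ = (Mᴴ)⁻¹ + M⁻¹ := by
    rw [hkey, mul_add, add_mul, hinv2, one_mul, mul_assoc, hinv3, mul_one]
  have hΞH : ((1 : Matrix (Fin m) (Fin m) ℂ) - C * M⁻¹ * Cᴴ)ᴴ
      = 1 - C * (Mᴴ)⁻¹ * Cᴴ := by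
    rw [conjTranspose_sub, conjTranspose_one, conjTranspose_mul, conjTranspose_mul,
      conjTranspose_conjTranspose, hinvH, Matrix.mul_assoc]
  rw [hΞH]
  have h4 : C * M⁻¹ * Cᴴ * (C * (Mᴴ)⁻¹ * Cᴴ)
      = C * (Mᴴ)⁻¹ * Cᴴ + C * M⁻¹ * Cᴴ := by
    calc C * M⁻¹ * Cᴴ * (C * (Mᴴ)⁻¹ * Cᴴ)
        = C * (M⁻¹ * (Cᴴ * C) * (Mᴴ)⁻¹) * Cᴴ := by
          simp only [Matrix.mul_assoc]
      _ = C * ((Mᴴ)⁻¹ + M⁻¹) * Cᴴ := by rw [hmid]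
      _ = C * (Mᴴ)⁻¹ * Cᴴ + C * M⁻¹ * Cᴴ := by rw [Matrix.mul_add, Matrix.add_mul]
  simp only [sub_mul, mul_sub, one_mul, mul_one, h4]
  abel
end
end

section
/- Let Ω ∈ ℂ^{n×n} be Hermitian, c₁ ∈ ℂ^{m₁×n}, c₂ ∈ ℂ^{m₂×n}, and A = -iΩ - (1/2)(c₁†c₁ + c₂†c₂). Suppose every eigenvector y of A satisfies c₁ y ≠ 0 (observability on the accessible channel). Then for every eigenvector z of A†, it is not the case that both c₁ z = 0 and c₂ z = 0 (controllability of the full system). -/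
noncomputable section
open Matrix

theorem stmt10 (n m₁ m₂ : ℕ) (Ω : Matrix (Fin n) (Fin n) ℂ) (hΩ : Ω.IsHermitian)
    (c₁ : Matrix (Fin m₁) (Fin n) ℂ) (c₂ : Matrix (Fin m₂) (Fin n) ℂ)
    (A : Matrix (Fin n) (Fin n) ℂ)
    (hA : A = -(Complex.I • Ω) - (1/2 : ℂ) • (c₁ᴴ * c₁ + c₂ᴴ * c₂))
    (hobs : ∀ (y : Fin n → ℂ) (l : ℂ), y ≠ 0 → A.mulVec y = l • y → c₁.mulVec y ≠ 0) :
    ∀ (z : Fin n → ℂ) (μ : ℂ), z ≠ 0 → Aᴴ.mulVec z = μ • z →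
      ¬(c₁.mulVec z = 0 ∧ c₂.mulVec z = 0) := by
  intro z μ hz hzev ⟨h1, h2⟩
  have hAH : Aᴴ = -A - (c₁ᴴ * c₁ + c₂ᴴ * c₂) := by
    subst hA
    simp only [conjTranspose_sub, conjTranspose_neg, conjTranspose_smul, conjTranspose_add,
      conjTranspose_mul, conjTranspose_conjTranspose, hΩ.eq, Complex.star_def, map_neg,
      Complex.conj_I, map_div₀, _root_.map_one, map_ofNat, Complex.conj_ofNat]
    module
  have hAz : A.mulVec z = (-μ) • z := by
    have : (-A - (c₁ᴴ * c₁ + c₂ᴴ * c₂)).mulVec z = μ • z := by rw [← hAH]; exact hzev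
    rw [sub_mulVec, neg_mulVec, add_mulVec, ← mulVec_mulVec, ← mulVec_mulVec, h1, h2,
      mulVec_zero, mulVec_zero, add_zero, sub_zero] at this
    rw [neg_smul, ← this, neg_neg]
  exact hobs z (-μ) hz hAz h1
end
end
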